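/- arXiv:2206.05088 — 3 statements merged into one kernel-verified Lean document; each statement's English description precedes it below -/
import Mathlib

section
/- Let n, l ≥ 1 and d = n + l. Let f : ℝⁿ → ℝ, A ∈ ℝ^{l×n}, b ∈ ℝ^l, σ ≥ 0, and let R ∈ ℝ^{n×n} be symmetric positive semidefinite. Let H ∈ ℝ^{d×d} be symmetric, M ∈ ℝ^{d×d}, Q := H M, and G := Qᵀ + Q − Mᵀ H M. Let v^k = (x^k, λ^k) ∈ ℝⁿ × ℝ^l, ṽ = (x̃, λ̃) ∈ ℝⁿ × ℝ^l, and z^k ∈ ℝⁿ. Suppose that for every u = (x, λ) ∈ ℝⁿ × ℝ^l: f(x) − f(x̃) + (x − x̃)ᵀ(−Aᵀλ̃) + (λ − λ̃)ᵀ(A x̃ − b) ≥ (u − ṽ)ᵀ Q (v^k − ṽ) + (σ/2)‖z^k − x‖²_R, and define v^{k+1} := v^k − M(v^k − ṽ). Then for every u = (x, λ) ∈ ℝⁿ × ℝ^l: f(x) − f(x̃) + (x − x̃)ᵀ(−Aᵀλ̃) + (λ − λ̃)ᵀ(A x̃ − b) ≥ (1/2)(‖v^{k+1} − u‖²_H +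 σ‖z^k − x‖²_R − ‖v^k − u‖²_H) + (1/2)‖v^k − ṽ‖²_G. -/
/-!
With `a = vᵏ - ṽ`, the correction `vᵏ⁺¹ = vᵏ - M a` and `Q = HM`, `G = Qᵀ + Q - MᵀHM`,
expanding `‖vᵏ⁺¹ - u‖²_H = ‖(vᵏ - u) - M a‖²_H` for symmetric `H` gives the exact identity
`(u - ṽ)ᵀ Q a = ½ (‖vᵏ⁺¹ - u‖²_H - ‖vᵏ - u‖²_H) + ½ ‖a‖²_G`,
which turns the prediction inequality into the claimed one.
-/

open Matrix

/-- `qf D w = wᵀ D w`, the (possibly indefinite) quadratic form `‖w‖²_D`. -/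
noncomputable def qf {m : Type*} [Fintype m] (D : Matrix m m ℝ) (w : m → ℝ) : ℝ :=
  w ⬝ᵥ D.mulVec w

section QuadraticForm

variable {m : Type*} [Fintype m]

lemma qf_transpose (D : Matrix m m ℝ) (w : m → ℝ) : qf Dᵀ w = qf D w := by
  rw [qf, qf, dotProduct_mulVec, ← mulVec_transpose, transpose_transpose, dotProduct_comm]

lemma qf_add (D E : Matrix m m ℝ) (w : m → ℝ) : qf (D + E) w = qf D w + qf E w := by
  simp only [qf, add_mulVec, dotProduct_add]

lemma qf_sub (D E : Matrix m m ℝ) (w : m → ℝ) : qf (D - E) w = qf D w - qf E w := by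
  simp only [qf, sub_mulVec, dotProduct_sub]

lemma qf_transpose_mul_mul (H M : Matrix m m ℝ) (w : m → ℝ) :
    qf (Mᵀ * H * M) w = qf H (M *ᵥ w) := by
  rw [qf, qf, Matrix.mul_assoc, ← mulVec_mulVec, dotProduct_mulVec, vecMul_transpose,
    ← mulVec_mulVec]

lemma qf_sub_vec {H : Matrix m m ℝ} (hH : H.IsSymm) (w y : m → ℝ) :
    qf H (w - y) = qf H w - 2 * (w ⬝ᵥ H *ᵥ y) + qf H y := by
  have hswap : y ⬝ᵥ H *ᵥ w = w ⬝ᵥ H *ᵥ y := by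
    rw [dotProduct_mulVec, ← mulVec_transpose, hH.eq, dotProduct_comm]
  simp only [qf, mulVec_sub, sub_dotProduct, dotProduct_sub, hswap]
  ring

lemma sub_dotProduct_mul_mulVec_eq_qf_correction {H : Matrix m m ℝ} (hH : H.IsSymm)
    (M : Matrix m m ℝ) (u v vt : m → ℝ) :
    (u - vt) ⬝ᵥ (H * M) *ᵥ (v - vt)
      = 1 / 2 * (qf H (v - M *ᵥ (v - vt) - u) - qf H (v - u))
        + 1 / 2 * qf ((H * M)ᵀ + H * M - Mᵀ * H * M) (v - vt) := by
  set a := v - vt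
  have hcorr : v - M *ᵥ a - u = (v - u) - M *ᵥ a := by abel
  have hsplit : u - vt = a - (v - u) := by simp only [a]; abel
  rw [hcorr, qf_sub_vec hH, qf_sub, qf_add, qf_transpose, qf_transpose_mul_mul, hsplit,
    sub_dotProduct, mulVec_mulVec]
  simp only [qf]
  ring

end QuadraticForm

theorem stmt1_general {n l : ℕ}
    (f : (Fin n → ℝ) → ℝ) (A : Matrix (Fin l) (Fin n) ℝ) (b : Fin l → ℝ)
    (σ : ℝ)
    (R : Matrix (Fin n) (Fin n) ℝ)
    (H M : Matrix (Fin (n + l)) (Fin (n + l)) ℝ) (hH : H.IsSymm)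
    (Q G : Matrix (Fin (n + l)) (Fin (n + l)) ℝ)
    (hQ : Q = H * M) (hG : G = Qᵀ + Q - Mᵀ * H * M)
    (xt : Fin n → ℝ) (lamt : Fin l → ℝ)
    (zk : Fin n → ℝ)
    (vk vkk vt : Fin (n + l) → ℝ)
    (hGPS : ∀ (x : Fin n → ℝ) (lam : Fin l → ℝ),
      f x - f xt + (x - xt) ⬝ᵥ (-(Aᵀ.mulVec lamt)) + (lam - lamt) ⬝ᵥ (A.mulVec xt - b)
        ≥ (Fin.append x lam - vt) ⬝ᵥ Q.mulVec (vk - vt) + σ / 2 * qf R (zk - x))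
    (hGCS : vkk = vk - M.mulVec (vk - vt)) :
    ∀ (x : Fin n → ℝ) (lam : Fin l → ℝ),
      f x - f xt + (x - xt) ⬝ᵥ (-(Aᵀ.mulVec lamt)) + (lam - lamt) ⬝ᵥ (A.mulVec xt - b)
        ≥ (1 / 2) * (qf H (vkk - Fin.append x lam) + σ * qf R (zk - x)
            - qf H (vk - Fin.append x lam))
          + (1 / 2) * qf G (vk - vt) := by
  intro x lam
  have hpred := hGPS x lam
  rw [hQ, sub_dotProduct_mul_mulVec_eq_qf_correction hH M, ← hQ, ← hG, ← hGCS] at hpred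
  linarith

/-- Lemma 2.2 for problem (P1): the generalized prediction step (GPS) together
with the generalized correction step (GCS) `v^{k+1} = v^k - M(v^k - ṽ)` and the
convergence conditions `Q = HM`, `G = Qᵀ + Q - MᵀHM` yields the telescoping
inequality. Vectors `u = (x, λ) ∈ ℝⁿ × ℝˡ` are encoded via `Fin.append`. -/
theorem stmt1 {n l : ℕ} (hn : 1 ≤ n) (hl : 1 ≤ l)
    (f : (Fin n → ℝ) → ℝ) (A : Matrix (Fin l) (Fin n) ℝ) (b : Fin l → ℝ)
    (σ : ℝ) (hσ : 0 ≤ σ)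
    (R : Matrix (Fin n) (Fin n) ℝ) (hR : R.PosSemidef)
    (H M : Matrix (Fin (n + l)) (Fin (n + l)) ℝ) (hH : H.IsSymm)
    (Q G : Matrix (Fin (n + l)) (Fin (n + l)) ℝ)
    (hQ : Q = H * M) (hG : G = Qᵀ + Q - Mᵀ * H * M)
    (xk : Fin n → ℝ) (lamk : Fin l → ℝ) (xt : Fin n → ℝ) (lamt : Fin l → ℝ)
    (zk : Fin n → ℝ)
    (vk vkk vt : Fin (n + l) → ℝ)
    (hvk : vk = Fin.append xk lamk) (hvt : vt = Fin.append xt lamt)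
    (hGPS : ∀ (x : Fin n → ℝ) (lam : Fin l → ℝ),
      f x - f xt + (x - xt) ⬝ᵥ (-(Aᵀ.mulVec lamt)) + (lam - lamt) ⬝ᵥ (A.mulVec xt - b)
        ≥ (Fin.append x lam - vt) ⬝ᵥ Q.mulVec (vk - vt) + σ / 2 * qf R (zk - x))
    (hGCS : vkk = vk - M.mulVec (vk - vt)) :
    ∀ (x : Fin n → ℝ) (lam : Fin l → ℝ),
      f x - f xt + (x - xt) ⬝ᵥ (-(Aᵀ.mulVec lamt)) + (lam - lamt) ⬝ᵥ (A.mulVec xt - b)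
        ≥ (1 / 2) * (qf H (vkk - Fin.append x lam) + σ * qf R (zk - x)
            - qf H (vk - Fin.append x lam))
          + (1 / 2) * qf G (vk - vt) :=
  stmt1_general f A b σ R H M hH Q G hQ hG xt lamt zk vk vkk vt hGPS hGCS
end

section
/- Let A₁ ∈ ℝ^{l×n₁}, A₂ ∈ ℝ^{l×n₂}, b ∈ ℝ^l, γ ∈ (0, (1+√5)/2], σ' ≥ 0, and 0 < β⁻ ≤ β with β³/(β + σ') ≤ (β⁻)². Let x₁^{k+1} ∈ ℝ^{n₁}, x₂^k, x₂^{k+1} ∈ ℝ^{n₂}, λ^k ∈ ℝ^l; write Δ := x₂^k − x₂^{k+1}, e := A₁x₁^{k+1} + A₂x₂^{k+1} − b, and let e₀ ∈ ℝ^l. Define λ̃ := λ^k − β(A₁x₁^{k+1} + A₂x₂^k − b), v^k := (x₂^k, λ^k), ṽ := (x₂^{k+1}, λ̃), and G := [ (1−γ) β A₂ᵀA₂, −(1−γ) A₂ᵀ ; −(1−γ) A₂, ((2−γ)/β) I_l ]. If β Δᵀ A₂ᵀ e ≥ (1 − γ) β⁻ Δᵀ A₂ᵀ e₀ + σ' ‖A₂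 Δ‖², then β ‖v^k − ṽ‖²_G ≥ (1 − γ)² [ β² ‖e‖² − (β⁻)² ‖e₀‖² ]. -/
open Matrix

/-!
Writing `Δ = x₂ᵏ - x₂ᵏ⁺¹` and `u = A₂Δ`, one has `vᵏ - ṽ = (Δ, β(u + e))`, and the block
structure of `G` collapses the quadratic form to
`β‖vᵏ - ṽ‖²_G = β²(‖u‖² + 2⟨u, e⟩ + (2 - γ)‖e‖²)`.
The hypothesis bounds `2β²⟨u, e⟩` below by `2β(1 - γ)β⁻⟨u, e₀⟩ + 2βσ'‖u‖²`, after which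
`β²‖u‖² + 2β(1 - γ)β⁻⟨u, e₀⟩ + (1 - γ)²(β⁻)²‖e₀‖² = ‖βu + (1 - γ)β⁻e₀‖² ≥ 0`
absorbs the cross term, and `(1 - γ)² ≤ 2 - γ` holds exactly for `γ` between the golden
ratio and its conjugate.
-/

open Real goldenRatio

lemma sq_one_sub_le_two_sub {γ : ℝ} (hψ : ψ ≤ γ) (hφ : γ ≤ φ) : (1 - γ) ^ 2 ≤ 2 - γ := by
  nlinarith [mul_nonneg (sub_nonneg.2 hφ) (sub_nonneg.2 hψ), goldenRatio_add_goldenConj,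
    goldenRatio_mul_goldenConj]

lemma dotProduct_self_nonneg {ι : Type*} [Fintype ι] (v : ι → ℝ) : 0 ≤ v ⬝ᵥ v :=
  Finset.sum_nonneg fun i _ => mul_self_nonneg (v i)

section QuadraticForm

variable {m n : Type*} [Fintype m] [Fintype n]

lemma qf_fromBlocks (P : Matrix m m ℝ) (Q : Matrix m n ℝ) (R : Matrix n m ℝ)
    (S : Matrix n n ℝ) (x : m → ℝ) (y : n → ℝ) :
    qf (fromBlocks P Q R S) (Sum.elim x y)
      = x ⬝ᵥ P *ᵥ x + x ⬝ᵥ Q *ᵥ y + (y ⬝ᵥ R *ᵥ x + y ⬝ᵥ S *ᵥ y) := by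
  simp only [qf, fromBlocks_mulVec, Sum.elim_comp_inl, Sum.elim_comp_inr,
    sumElim_dotProduct_sumElim, dotProduct_add]

variable [DecidableEq m]

lemma mul_qf_fromBlocks_admm (A : Matrix m n ℝ) {γ β : ℝ} (hβ : β ≠ 0) (Δ : n → ℝ)
    (e : m → ℝ) :
    β * qf (fromBlocks (((1 - γ) * β) • (Aᵀ * A)) (-((1 - γ) • Aᵀ))
        (-((1 - γ) • A)) (((2 - γ) / β) • 1)) (Sum.elim Δ (β • (A *ᵥ Δ + e)))
      = β ^ 2 * (A *ᵥ Δ ⬝ᵥ A *ᵥ Δ + 2 * (A *ᵥ Δ ⬝ᵥ e) + (2 - γ) * (e ⬝ᵥ e)) := by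
  simp only [qf_fromBlocks, smul_mulVec, neg_mulVec, one_mulVec, ← mulVec_mulVec,
    mulVec_smul, dotProduct_add, add_dotProduct, dotProduct_smul, smul_dotProduct,
    dotProduct_neg, dotProduct_transpose_mulVec, dotProduct_comm e, smul_eq_mul]
  field_simp
  ring

end QuadraticForm

lemma admm_residual_estimate {ι : Type*} [Fintype ι] (u e e₀ : ι → ℝ) {γ σ' βm β : ℝ}
    (hγ : (1 - γ) ^ 2 ≤ 2 - γ) (hσ' : 0 ≤ σ') (hβ : 0 ≤ β)
    (hyp : (1 - γ) * βm * (u ⬝ᵥ e₀) + σ' * (u ⬝ᵥ u) ≤ β * (u ⬝ᵥ e)) :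
    (1 - γ) ^ 2 * (β ^ 2 * (e ⬝ᵥ e) - βm ^ 2 * (e₀ ⬝ᵥ e₀))
      ≤ β ^ 2 * (u ⬝ᵥ u + 2 * (u ⬝ᵥ e) + (2 - γ) * (e ⬝ᵥ e)) := by
  set c := (1 - γ) * βm
  have hsq : 0 ≤ β ^ 2 * (u ⬝ᵥ u) + 2 * (β * c) * (u ⬝ᵥ e₀) + c ^ 2 * (e₀ ⬝ᵥ e₀) := by
    have h := dotProduct_self_nonneg (β • u + c • e₀)
    simp only [dotProduct_add, add_dotProduct, dotProduct_smul, smul_dotProduct,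
      smul_eq_mul, dotProduct_comm e₀ u] at h
    linarith
  have hslack : 0 ≤ 2 * β * (β * (u ⬝ᵥ e) - c * (u ⬝ᵥ e₀) - σ' * (u ⬝ᵥ u)) :=
    mul_nonneg (by positivity) (by linarith)
  have hσu : 0 ≤ 2 * β * σ' * (u ⬝ᵥ u) := by have := dotProduct_self_nonneg u; positivity
  have hee : 0 ≤ (2 - γ - (1 - γ) ^ 2) * β ^ 2 * (e ⬝ᵥ e) :=
    mul_nonneg (mul_nonneg (by linarith) (sq_nonneg β)) (dotProduct_self_nonneg e)
  linarith

theorem stmt12_general {n₁ n₂ l : ℕ}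
    (A₁ : Matrix (Fin l) (Fin n₁) ℝ) (A₂ : Matrix (Fin l) (Fin n₂) ℝ) (b : Fin l → ℝ)
    (γ : ℝ) (hγ : γ ∈ Set.Ioc (0 : ℝ) ((1 + Real.sqrt 5) / 2))
    (σ' : ℝ) (hσ' : 0 ≤ σ')
    (βm β : ℝ) (hβm : 0 < βm) (hle : βm ≤ β)
    (x1kk : Fin n₁ → ℝ) (x2k x2kk : Fin n₂ → ℝ) (lamk : Fin l → ℝ)
    (e e₀ : Fin l → ℝ)
    (he : e = A₁.mulVec x1kk + A₂.mulVec x2kk - b)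
    (lamt : Fin l → ℝ)
    (hlamt : lamt = lamk - β • (A₁.mulVec x1kk + A₂.mulVec x2k - b))
    (G : Matrix (Fin n₂ ⊕ Fin l) (Fin n₂ ⊕ Fin l) ℝ)
    (hG : G = Matrix.fromBlocks (((1 - γ) * β) • (A₂ᵀ * A₂)) (-((1 - γ) • A₂ᵀ))
        (-((1 - γ) • A₂)) (((2 - γ) / β) • 1))
    (hyp : β * ((x2k - x2kk) ⬝ᵥ A₂ᵀ.mulVec e)
      ≥ (1 - γ) * βm * ((x2k - x2kk) ⬝ᵥ A₂ᵀ.mulVec e₀)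
        + σ' * (A₂.mulVec (x2k - x2kk) ⬝ᵥ A₂.mulVec (x2k - x2kk))) :
    β * qf G (Sum.elim x2k lamk - Sum.elim x2kk lamt)
      ≥ (1 - γ) ^ 2 * (β ^ 2 * (e ⬝ᵥ e) - βm ^ 2 * (e₀ ⬝ᵥ e₀)) := by
  have hβ : 0 < β := hβm.trans_le hle
  have hγ' : (1 - γ) ^ 2 ≤ 2 - γ := sq_one_sub_le_two_sub (goldenConj_neg.le.trans hγ.1.le) hγ.2
  have hres : A₁ *ᵥ x1kk + A₂ *ᵥ x2k - b = A₂ *ᵥ (x2k - x2kk) + e := by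
    rw [he, mulVec_sub]
    abel
  have hdiff : Sum.elim x2k lamk - Sum.elim x2kk lamt
      = Sum.elim (x2k - x2kk) (β • (A₂ *ᵥ (x2k - x2kk) + e)) := by
    rw [hlamt, hres]
    ext (i | i) <;> simp
  rw [hG, hdiff, mul_qf_fromBlocks_admm A₂ hβ.ne']
  simp only [dotProduct_transpose_mulVec, dotProduct_comm e, dotProduct_comm e₀] at hyp
  exact admm_residual_estimate _ e e₀ hγ' hσ' hβ.le hyp

/-- The key estimate (3.30) in the proof of Theorem 3.3: for
`γ ∈ (0, (1+√5)/2]`, `σ' ≥ 0`, `0 < β⁻ ≤ β` with `β³/(β+σ') ≤ (β⁻)²`, if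
`βΔᵀA₂ᵀe ≥ (1-γ)β⁻ΔᵀA₂ᵀe₀ + σ'‖A₂Δ‖²`, then
`β‖vᵏ - ṽ‖²_G ≥ (1-γ)²[β²‖e‖² - (β⁻)²‖e₀‖²]`. -/
theorem stmt12 {n₁ n₂ l : ℕ}
    (A₁ : Matrix (Fin l) (Fin n₁) ℝ) (A₂ : Matrix (Fin l) (Fin n₂) ℝ) (b : Fin l → ℝ)
    (γ : ℝ) (hγ : γ ∈ Set.Ioc (0 : ℝ) ((1 + Real.sqrt 5) / 2))
    (σ' : ℝ) (hσ' : 0 ≤ σ')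
    (βm β : ℝ) (hβm : 0 < βm) (hle : βm ≤ β)
    (hstep : β ^ 3 / (β + σ') ≤ βm ^ 2)
    (x1kk : Fin n₁ → ℝ) (x2k x2kk : Fin n₂ → ℝ) (lamk : Fin l → ℝ)
    (e e₀ : Fin l → ℝ)
    (he : e = A₁.mulVec x1kk + A₂.mulVec x2kk - b)
    (lamt : Fin l → ℝ)
    (hlamt : lamt = lamk - β • (A₁.mulVec x1kk + A₂.mulVec x2k - b))
    (G : Matrix (Fin n₂ ⊕ Fin l) (Fin n₂ ⊕ Fin l) ℝ)
    (hG : G = Matrix.fromBlocks (((1 - γ) * β) • (A₂ᵀ * A₂)) (-((1 - γ) • A₂ᵀ))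
        (-((1 - γ) • A₂)) (((2 - γ) / β) • 1))
    (hyp : β * ((x2k - x2kk) ⬝ᵥ A₂ᵀ.mulVec e)
      ≥ (1 - γ) * βm * ((x2k - x2kk) ⬝ᵥ A₂ᵀ.mulVec e₀)
        + σ' * (A₂.mulVec (x2k - x2kk) ⬝ᵥ A₂.mulVec (x2k - x2kk))) :
    β * qf G (Sum.elim x2k lamk - Sum.elim x2kk lamt)
      ≥ (1 - γ) ^ 2 * (β ^ 2 * (e ⬝ᵥ e) - βm ^ 2 * (e₀ ⬝ᵥ e₀)) :=
  stmt12_general A₁ A₂ b γ hγ σ' hσ' βm β hβm hle x1kk x2k x2kk lamk e e₀ he lamt hlamt G hG hyp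
end

section
/- Let A ∈ ℝ^{l×n}, r > σ_max(AᵀA), τ > 0, δ > 0, let (s^k)_{k≥0} be nonnegative reals, and let (x^k)_{k≥0} be a sequence in ℝⁿ such that for every k ≥ 0: s^{k+1} + τ δ² (k+1)² (x^k − x^{k+1})ᵀ( r I_n − AᵀA )(x^k − x^{k+1}) ≤ s^k. Then for every K ≥ 0: min_{0 ≤ k ≤ K} ‖x^k − x^{k+1}‖² ≤ 6 s^0 / ( τ δ² ( r − σ_max(AᵀA) ) (K+1)(K+2)(2K+3) ). -/
/-! The quadratic form of `rI - AᵀA` dominates `(r - σ_max(AᵀA)) ‖v‖²`, because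
`σ_max(B) I - B` is positive semidefinite for symmetric `B`. The per-step inequality therefore
says that `sᵏ` decreases by at least `τδ²(r - σ_max)(k+1)² ‖xᵏ - x^{k+1}‖²`; telescoping against
`s ≥ 0` bounds the weighted sum of the squared differences by `s⁰`, and bounding each difference
below by the minimum leaves `∑_{k ≤ K} (k+1)² = (K+1)(K+2)(2K+3)/6`. -/

open Matrix

/-- `maxEig B` is the largest eigenvalue of `B` (for a symmetric matrix, the
supremum of its eigenvalue set), denoted `σ_max(B)` in the paper. -/
noncomputable def maxEig {m : Type*} [Fintype m] (B : Matrix m m ℝ) : ℝ :=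
  sSup {μ : ℝ | ∃ v : m → ℝ, v ≠ 0 ∧ B.mulVec v = μ • v}

theorem Matrix.mem_spectrum_iff_exists_mulVec_eq_smul {K m : Type*} [Field K] [Fintype m]
    [DecidableEq m] {B : Matrix m m K} {μ : K} :
    μ ∈ spectrum K B ↔ ∃ v : m → K, v ≠ 0 ∧ B *ᵥ v = μ • v := by
  rw [← spectrum_toLin', ← Module.End.hasEigenvalue_iff_mem_spectrum,
    Module.End.hasEigenvalue_iff, Submodule.ne_bot_iff]
  simp [and_comm]

theorem maxEig_eq_sSup_spectrum {m : Type*} [Fintype m] [DecidableEq m] (B : Matrix m m ℝ) :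
    maxEig B = sSup (spectrum ℝ B) := by
  simp only [maxEig, ← Matrix.mem_spectrum_iff_exists_mulVec_eq_smul, Set.ofPred_mem_eq]

namespace Matrix.IsHermitian

variable {m : Type*} [Fintype m] {B : Matrix m m ℝ}

theorem le_maxEig_of_mem_spectrum [DecidableEq m] (hB : B.IsHermitian) {μ : ℝ}
    (hμ : μ ∈ spectrum ℝ B) : μ ≤ maxEig B := by
  rw [maxEig_eq_sSup_spectrum]
  exact le_csSup (hB.spectrum_real_eq_range_eigenvalues ▸ (Set.finite_range _).bddAbove) hμ

theorem posSemidef_maxEig_smul_one_sub [DecidableEq m] (hB : B.IsHermitian) :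
    (maxEig B • 1 - B).PosSemidef := by
  rw [← Algebra.algebraMap_eq_smul_one]
  refine posSemidef_iff_isHermitian_and_spectrum_nonneg.mpr ⟨(isHermitian_diagonal _).sub hB, ?_⟩
  rw [← spectrum.singleton_sub_eq]
  rintro _ ⟨_, rfl, μ, hμ, rfl⟩
  exact sub_nonneg.mpr (hB.le_maxEig_of_mem_spectrum hμ)

theorem sub_maxEig_mul_dotProduct_le [DecidableEq m] (hB : B.IsHermitian) (r : ℝ) (v : m → ℝ) :
    (r - maxEig B) * (v ⬝ᵥ v) ≤ v ⬝ᵥ (r • 1 - B) *ᵥ v := by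
  have hpsd := hB.posSemidef_maxEig_smul_one_sub.dotProduct_mulVec_nonneg v
  simp only [star_trivial, sub_mulVec, dotProduct_sub, smul_mulVec, one_mulVec, dotProduct_smul,
    smul_eq_mul] at hpsd ⊢
  linarith

end Matrix.IsHermitian

theorem Finset.inf'_mul_sum_le_sum_mul {ι : Type*} {t : Finset ι} (ht : t.Nonempty)
    (d w : ι → ℝ) (hw : ∀ i ∈ t, 0 ≤ w i) : t.inf' ht d * ∑ i ∈ t, w i ≤ ∑ i ∈ t, w i * d i := by
  rw [Finset.mul_sum]
  exact Finset.sum_le_sum fun i hi => by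
    rw [mul_comm]
    exact mul_le_mul_of_nonneg_left (Finset.inf'_le d hi) (hw i hi)

theorem Finset.sum_range_le_of_add_le {s a : ℕ → ℝ} (hs : ∀ k, 0 ≤ s k)
    (hdesc : ∀ k, s (k + 1) + a k ≤ s k) (N : ℕ) : ∑ k ∈ Finset.range N, a k ≤ s 0 := by
  have htele : ∑ k ∈ Finset.range N, a k ≤ ∑ k ∈ Finset.range N, (s k - s (k + 1)) :=
    Finset.sum_le_sum fun k _ => by linarith [hdesc k]
  rw [Finset.sum_range_sub'] at htele
  linarith [hs N]

theorem Finset.sum_range_succ_add_one_sq (K : ℕ) :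
    ∑ k ∈ Finset.range (K + 1), ((k : ℝ) + 1) ^ 2
      = ((K : ℝ) + 1) * ((K : ℝ) + 2) * (2 * (K : ℝ) + 3) / 6 := by
  induction K with
  | zero => norm_num
  | succ K ih => rw [Finset.sum_range_succ, ih]; push_cast; ring

/-- Remark 3.2 made precise: if a nonnegative sequence `sᵏ` satisfies
`s^{k+1} + τδ²(k+1)²(xᵏ - x^{k+1})ᵀ(rI - AᵀA)(xᵏ - x^{k+1}) ≤ sᵏ` for all `k`,
with `r > σ_max(AᵀA)`, then
`min_{0≤k≤K} ‖xᵏ - x^{k+1}‖² ≤ 6s⁰/(τδ²(r - σ_max(AᵀA))(K+1)(K+2)(2K+3))`. -/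
theorem stmt19 {n l : ℕ}
    (A : Matrix (Fin l) (Fin n) ℝ)
    (r : ℝ) (hr : maxEig (Aᵀ * A) < r)
    (τ δ : ℝ) (hτ : 0 < τ) (hδ : 0 < δ)
    (s : ℕ → ℝ) (hs : ∀ k, 0 ≤ s k)
    (x : ℕ → Fin n → ℝ)
    (hstep : ∀ k : ℕ,
      s (k + 1) + τ * δ ^ 2 * ((k : ℝ) + 1) ^ 2 *
          ((x k - x (k + 1)) ⬝ᵥ
            ((r • (1 : Matrix (Fin n) (Fin n) ℝ) - Aᵀ * A).mulVec (x k - x (k + 1))))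
        ≤ s k) :
    ∀ K : ℕ,
      (Finset.range (K + 1)).inf' Finset.nonempty_range_add_one
          (fun k => (x k - x (k + 1)) ⬝ᵥ (x k - x (k + 1)))
        ≤ 6 * s 0 / (τ * δ ^ 2 * (r - maxEig (Aᵀ * A))
            * ((K : ℝ) + 1) * ((K : ℝ) + 2) * (2 * (K : ℝ) + 3)) := by
  intro K
  have hB : (Aᵀ * A).IsHermitian := by
    rw [← conjTranspose_eq_transpose_of_trivial]
    exact isHermitian_conjTranspose_mul_self A
  set c := τ * δ ^ 2 * (r - maxEig (Aᵀ * A))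
  have hc : 0 < c := by have := sub_pos.mpr hr; positivity
  set d := fun k => (x k - x (k + 1)) ⬝ᵥ (x k - x (k + 1))
  have hdesc : ∀ k, s (k + 1) + c * ((k : ℝ) + 1) ^ 2 * d k ≤ s k := fun k =>
    calc s (k + 1) + c * ((k : ℝ) + 1) ^ 2 * d k
        = s (k + 1) + τ * δ ^ 2 * ((k : ℝ) + 1) ^ 2 * ((r - maxEig (Aᵀ * A)) * d k) := by ring
      _ ≤ _ := by gcongr; exact hB.sub_maxEig_mul_dotProduct_le r (x k - x (k + 1))
      _ ≤ s k := hstep k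
  have hweighted := Finset.inf'_mul_sum_le_sum_mul (Finset.nonempty_range_add_one (n := K)) d
    (fun k => c * ((k : ℝ) + 1) ^ 2) fun k _ => by positivity
  rw [← Finset.mul_sum, Finset.sum_range_succ_add_one_sq] at hweighted
  have hsum := Finset.sum_range_le_of_add_le hs hdesc (K + 1)
  rw [le_div_iff₀ (by positivity)]
  linarith
end
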